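/- arXiv:2312.01034 — 2 statements merged into one kernel-verified Lean document; each statement's English description precedes it below -/
import Mathlib

section
/- Fix p ∈ [1,∞] and let D ∈ 𝒟^p. Then D is range normalized (D ∈ 𝒟̄^p) if and only if the functional X ↦ D(X) + E[X] on L^p is a coherent risk measure and, for every λ > 1, the functional X ↦ λD(X) + E[X] is not a coherent risk measure. -/
open MeasureTheory Filter Set
open scoped ENNReal

noncomputable section

variable {Ω : Type*} [MeasurableSpace Ω]

/-- The measure `μ` is nonatomic. -/
def Nonatomic (μ : Measure Ω) : Prop :=
  ∀ A : Set Ω, MeasurableSet A → 0 < μ A →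
    ∃ B, B ⊆ A ∧ MeasurableSet B ∧ 0 < μ B ∧ μ B < μ A

/-- `X` is a.s. equal to a constant. -/
def AEConst (μ : Measure Ω) (X : Ω → ℝ) : Prop :=
  ∃ c : ℝ, X =ᵐ[μ] fun _ => c

/-- `D` is a deviation measure on `L^p`: it is `[0,∞)`-valued and satisfies
(D1) translation invariance, (D2) strict positivity on nonconstant random variables,
(D3) positive homogeneity and (D4) subadditivity. -/
def IsDeviation (μ : Measure Ω) (p : ℝ≥0∞) (D : (Ω → ℝ) → ℝ) : Prop :=
  (∀ X, MemLp X p μ → 0 ≤ D X) ∧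
  (∀ X, MemLp X p μ → ∀ c : ℝ, D (fun ω => X ω + c) = D X) ∧
  (∀ X, MemLp X p μ → ¬ AEConst μ X → 0 < D X) ∧
  (∀ X, MemLp X p μ → ∀ l : ℝ, 0 ≤ l → D (fun ω => l * X ω) = l * D X) ∧
  (∀ X Y, MemLp X p μ → MemLp Y p μ → D (fun ω => X ω + Y ω) ≤ D X + D Y)

/-- (D5) law invariance. -/
def LawInvariant (μ : Measure Ω) (p : ℝ≥0∞) (D : (Ω → ℝ) → ℝ) : Prop :=
  ∀ X Y, MemLp X p μ → MemLp Y p μ → μ.map X = μ.map Y → D X = D Y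

/-- `D` is range normalized: the supremum over nonconstant `X ∈ L^p` of
`D X / (ess-sup X - E[X])` equals `1` (the ratio being interpreted as `0` when
`ess-sup X = ∞`, so that only essentially bounded `X` matter):
`1` is an upper bound of the ratios, and no `k < 1` is an upper bound. -/
def RangeNormalized (μ : Measure Ω) (p : ℝ≥0∞) (D : (Ω → ℝ) → ℝ) : Prop :=
  (∀ X, MemLp X p μ → (∃ c : ℝ, ∀ᵐ ω ∂μ, X ω ≤ c) →
    D X ≤ essSup X μ - ∫ ω, X ω ∂μ) ∧
  (∀ k : ℝ, k < 1 → ∃ X, MemLp X p μ ∧ (∃ c : ℝ, ∀ᵐ ω ∂μ, X ω ≤ c) ∧ ¬ AEConst μ X ∧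
    k * (essSup X μ - ∫ ω, X ω ∂μ) < D X)

/-- Monotonicity [M] for a real-valued functional on `L^p`. -/
def MonotoneRM (μ : Measure Ω) (p : ℝ≥0∞) (ρ : (Ω → ℝ) → ℝ) : Prop :=
  ∀ X Y, MemLp X p μ → MemLp Y p μ → (∀ᵐ ω ∂μ, X ω ≤ Y ω) → ρ X ≤ ρ Y

/-- Cash additivity [CA]. -/
def CashAdditive (μ : Measure Ω) (p : ℝ≥0∞) (ρ : (Ω → ℝ) → ℝ) : Prop :=
  ∀ X, MemLp X p μ → ∀ c : ℝ, ρ (fun ω => X ω + c) = ρ X + c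

/-- Positive homogeneity [PH]. -/
def PosHom (μ : Measure Ω) (p : ℝ≥0∞) (ρ : (Ω → ℝ) → ℝ) : Prop :=
  ∀ X, MemLp X p μ → ∀ l : ℝ, 0 < l → ρ (fun ω => l * X ω) = l * ρ X

/-- Subadditivity [SA]. -/
def SubadditiveRM (μ : Measure Ω) (p : ℝ≥0∞) (ρ : (Ω → ℝ) → ℝ) : Prop :=
  ∀ X Y, MemLp X p μ → MemLp Y p μ → ρ (fun ω => X ω + Y ω) ≤ ρ X + ρ Y

/-- Convexity [Cx]. -/
def ConvexRMProp (μ : Measure Ω) (p : ℝ≥0∞) (ρ : (Ω → ℝ) → ℝ) : Prop :=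
  ∀ X Y, MemLp X p μ → MemLp Y p μ → ∀ l : ℝ, 0 ≤ l → l ≤ 1 →
    ρ (fun ω => l * X ω + (1 - l) * Y ω) ≤ l * ρ X + (1 - l) * ρ Y

/-- SSD-consistency [SC]: `ρ X ≤ ρ Y` whenever `E[u(X)] ≤ E[u(Y)]` for every
increasing convex `u` (for which both expectations exist). -/
def SSDConsistent (μ : Measure Ω) (p : ℝ≥0∞) (ρ : (Ω → ℝ) → ℝ) : Prop :=
  ∀ X Y, MemLp X p μ → MemLp Y p μ →
    (∀ u : ℝ → ℝ, Monotone u → ConvexOn ℝ univ u →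
      Integrable (fun ω => u (X ω)) μ → Integrable (fun ω => u (Y ω)) μ →
      ∫ ω, u (X ω) ∂μ ≤ ∫ ω, u (Y ω) ∂μ) →
    ρ X ≤ ρ Y

/-- Monetary risk measure: [M] and [CA]. -/
def Monetary (μ : Measure Ω) (p : ℝ≥0∞) (ρ : (Ω → ℝ) → ℝ) : Prop :=
  MonotoneRM μ p ρ ∧ CashAdditive μ p ρ

/-- Coherent risk measure: [M], [CA], [PH], [SA]. -/
def Coherent (μ : Measure Ω) (p : ℝ≥0∞) (ρ : (Ω → ℝ) → ℝ) : Prop :=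
  MonotoneRM μ p ρ ∧ CashAdditive μ p ρ ∧ PosHom μ p ρ ∧ SubadditiveRM μ p ρ

/-- Convex risk measure: monetary and [Cx]. -/
def ConvexRiskMeasure (μ : Measure Ω) (p : ℝ≥0∞) (ρ : (Ω → ℝ) → ℝ) : Prop :=
  Monetary μ p ρ ∧ ConvexRMProp μ p ρ

/-- Consistent risk measure: monetary and [SC]. -/
def ConsistentRiskMeasure (μ : Measure Ω) (p : ℝ≥0∞) (ρ : (Ω → ℝ) → ℝ) : Prop :=
  Monetary μ p ρ ∧ SSDConsistent μ p ρ

/-- Star-shaped risk measure: monetary, normalized at `0` and star-shaped. -/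
def StarShapedRM (μ : Measure Ω) (p : ℝ≥0∞) (ρ : (Ω → ℝ) → ℝ) : Prop :=
  Monetary μ p ρ ∧ ρ (fun _ => 0) = 0 ∧
    ∀ X, MemLp X p μ → ∀ l : ℝ, 0 ≤ l → l ≤ 1 → ρ (fun ω => l * X ω) ≤ l * ρ X

/-- `g ∈ 𝒢`: a risk-weighting function, i.e. a nonconstant, increasing,
1-Lipschitz function on `[0,∞)` with `g 0 = 0`. -/
def IsRiskWeight (g : ℝ → ℝ) : Prop :=
  (∃ x y : ℝ, 0 ≤ x ∧ 0 ≤ y ∧ g x ≠ g y) ∧ MonotoneOn g (Ici 0) ∧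
  (∀ x y : ℝ, 0 ≤ x → 0 ≤ y → |g x - g y| ≤ |x - y|) ∧ g 0 = 0

/-- The monotonic mean-deviation measure `MD^D_g = g ∘ D + E`. -/
def MD (μ : Measure Ω) (D : (Ω → ℝ) → ℝ) (g : ℝ → ℝ) (X : Ω → ℝ) : ℝ :=
  g (D X) + ∫ ω, X ω ∂μ

/-- `V : ℝ × [0,∞) → (−∞,∞]` defining a mean-deviation model:
increasing in each argument, `V m 0 = m`, never `−∞`, and depending
nontrivially on the deviation argument. -/
def IsMDModelV (V : ℝ → ℝ → EReal) : Prop :=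
  (∀ d : ℝ, 0 ≤ d → Monotone (fun m => V m d)) ∧
  (∀ m : ℝ, MonotoneOn (fun d => V m d) (Ici 0)) ∧
  (∀ m : ℝ, V m 0 = (m : EReal)) ∧
  (∀ m d : ℝ, 0 ≤ d → V m d ≠ ⊥) ∧
  (∃ m d₁ d₂ : ℝ, 0 ≤ d₁ ∧ 0 ≤ d₂ ∧ V m d₁ ≠ V m d₂)

/-- Monotonicity [M] for an `(−∞,∞]`-valued functional. -/
def MonotoneE (μ : Measure Ω) (p : ℝ≥0∞) (U : (Ω → ℝ) → EReal) : Prop :=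
  ∀ X Y, MemLp X p μ → MemLp Y p μ → (∀ᵐ ω ∂μ, X ω ≤ Y ω) → U X ≤ U Y

/-- Cash additivity [CA] for an `(−∞,∞]`-valued functional. -/
def CashAdditiveE (μ : Measure Ω) (p : ℝ≥0∞) (U : (Ω → ℝ) → EReal) : Prop :=
  ∀ X, MemLp X p μ → ∀ c : ℝ, U (fun ω => X ω + c) = U X + (c : EReal)

/-- SSD-consistency [SC] for an `(−∞,∞]`-valued functional. -/
def SSDConsistentE (μ : Measure Ω) (p : ℝ≥0∞) (U : (Ω → ℝ) → EReal) : Prop :=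
  ∀ X Y, MemLp X p μ → MemLp Y p μ →
    (∀ u : ℝ → ℝ, Monotone u → ConvexOn ℝ univ u →
      Integrable (fun ω => u (X ω)) μ → Integrable (fun ω => u (Y ω)) μ →
      ∫ ω, u (X ω) ∂μ ≤ ∫ ω, u (Y ω) ∂μ) →
    U X ≤ U Y

/-- Left derivative of a real function. -/
def leftDeriv (f : ℝ → ℝ) (x : ℝ) : ℝ := derivWithin f (Iio x) x

/-- The conjugate function `g*(y) = sup_{x ≥ 0} (x y − g x)`, with values in `(−∞,∞]`. -/
def conjFun (g : ℝ → ℝ) (y : ℝ) : EReal :=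
  ⨆ x : Ici (0:ℝ), ((x.1 * y - g x.1 : ℝ) : EReal)

/-- Value-at-Risk: the left `α`-quantile of `X`. -/
def VaR (μ : Measure Ω) (X : Ω → ℝ) (α : ℝ) : ℝ :=
  sInf {x : ℝ | ENNReal.ofReal α ≤ μ {ω | X ω ≤ x}}

/-- The signed Choquet integral `D_h(X) = ∫₀¹ VaR_α(X) h'(1−α) dα`. -/
def Dh (μ : Measure Ω) (h : ℝ → ℝ) (X : Ω → ℝ) : ℝ :=
  ∫ α in (0:ℝ)..1, VaR μ X α * leftDeriv h (1 - α)

/-- `Φ^p` (described via the conjugate exponent `q`): concave functions `h` on `[0,1]`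
with `h 0 = h 1 = 0` and `‖h'‖_q < ∞`. -/
def PhiSet (q : ℝ≥0∞) : Set (ℝ → ℝ) :=
  {h | ConcaveOn ℝ (Icc 0 1) h ∧ h 0 = 0 ∧ h 1 = 0 ∧
    MemLp (leftDeriv h) q ((volume : Measure ℝ).restrict (Ioo 0 1))}

/-- The `L²[0,1]` norm of a function. -/
def Lnorm2 (f : ℝ → ℝ) : ℝ := Real.sqrt (∫ t in (0:ℝ)..1, (f t) ^ 2)

/-- Left quantile function of a distribution (probability measure) on `ℝ`. -/
def qtl (ν : Measure ℝ) (u : ℝ) : ℝ := sInf {x : ℝ | ENNReal.ofReal u ≤ ν (Iic x)}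

/-- Convex order `X ≤_cx Y`: `E[φ(X)] ≤ E[φ(Y)]` for every convex `φ` for which
both expectations exist. -/
def ConvexOrder (μ : Measure Ω) (X Y : Ω → ℝ) : Prop :=
  ∀ φ : ℝ → ℝ, ConvexOn ℝ univ φ → Integrable (fun ω => φ (X ω)) μ →
    Integrable (fun ω => φ (Y ω)) μ → ∫ ω, φ (X ω) ∂μ ≤ ∫ ω, φ (Y ω) ∂μ

/-- `R` is a total preorder on `L^p`. -/
def TotalPreorderOn (μ : Measure Ω) (p : ℝ≥0∞) (R : (Ω → ℝ) → (Ω → ℝ) → Prop) : Prop :=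
  (∀ X, MemLp X p μ → R X X) ∧
  (∀ X Y Z, MemLp X p μ → MemLp Y p μ → MemLp Z p μ → R X Y → R Y Z → R X Z) ∧
  (∀ X Y, MemLp X p μ → MemLp Y p μ → R X Y ∨ R Y X)

/-- Axiom A1 (monotonicity): `X ≤ Y` a.s. implies `X ≽ Y`. -/
def AxiomA1 (μ : Measure Ω) (p : ℝ≥0∞) (R : (Ω → ℝ) → (Ω → ℝ) → Prop) : Prop :=
  ∀ X Y, MemLp X p μ → MemLp Y p μ → (∀ᵐ ω ∂μ, X ω ≤ Y ω) → R X Y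

/-- Axiom B1: for constants `c₁ ≤ c₂` one has `c₁ ≽ c₂`. -/
def AxiomB1 (R : (Ω → ℝ) → (Ω → ℝ) → Prop) : Prop :=
  ∀ c₁ c₂ : ℝ, c₁ ≤ c₂ → R (fun _ => c₁) (fun _ => c₂)

/-- Axiom A2 (translation invariance). -/
def AxiomA2 (μ : Measure Ω) (p : ℝ≥0∞) (R : (Ω → ℝ) → (Ω → ℝ) → Prop) : Prop :=
  ∀ X Y, MemLp X p μ → MemLp Y p μ → ∀ c : ℝ,
    (R X Y ↔ R (fun ω => X ω + c) (fun ω => Y ω + c))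

/-- Axiom A3 (weak positive homogeneity). -/
def AxiomA3 (μ : Measure Ω) (p : ℝ≥0∞) (R : (Ω → ℝ) → (Ω → ℝ) → Prop) : Prop :=
  ∀ X Y, MemLp X p μ → MemLp Y p μ → (∫ ω, X ω ∂μ) = (∫ ω, Y ω ∂μ) → R X Y →
    ∀ l : ℝ, 0 < l → R (fun ω => l * X ω) (fun ω => l * Y ω)

/-- Axiom A4 (risk aversion). -/
def AxiomA4 (μ : Measure Ω) (p : ℝ≥0∞) (R : (Ω → ℝ) → (Ω → ℝ) → Prop) : Prop :=
  (∀ X Y, MemLp X p μ → MemLp Y p μ → ConvexOrder μ X Y → R X Y) ∧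
  (∀ X, MemLp X p μ → ¬ AEConst μ X →
    R (fun _ => ∫ ω, X ω ∂μ) X ∧ ¬ R X (fun _ => ∫ ω, X ω ∂μ))

/-- Axiom A5 (solvability). -/
def AxiomA5 (μ : Measure Ω) (p : ℝ≥0∞) (R : (Ω → ℝ) → (Ω → ℝ) → Prop) : Prop :=
  ∀ X, MemLp X p μ → ∃ c : ℝ, R X (fun _ => c) ∧ R (fun _ => c) X

/-- Axiom A6 (weak convexity). -/
def AxiomA6 (μ : Measure Ω) (p : ℝ≥0∞) (R : (Ω → ℝ) → (Ω → ℝ) → Prop) : Prop :=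
  ∀ X Y, MemLp X p μ → MemLp Y p μ → (∫ ω, X ω ∂μ) = (∫ ω, Y ω ∂μ) →
    R X Y → R Y X →
    ∀ l : ℝ, 0 ≤ l → l ≤ 1 → R (fun ω => l * X ω + (1 - l) * Y ω) X

/-- Axiom A7 (continuity): the upper and lower sets of every `X` are closed in the
`L^p` norm (expressed via sequential closedness, equivalent in the metric space `L^p`). -/
def AxiomA7 (μ : Measure Ω) (p : ℝ≥0∞) (R : (Ω → ℝ) → (Ω → ℝ) → Prop) : Prop :=
  ∀ X, MemLp X p μ →
    (∀ (Y : ℕ → Ω → ℝ) (Z : Ω → ℝ), (∀ n, MemLp (Y n) p μ) → MemLp Z p μ →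
      Tendsto (fun n => eLpNorm (fun ω => Y n ω - Z ω) p μ) atTop (nhds 0) →
      (∀ n, R (Y n) X) → R Z X) ∧
    (∀ (Y : ℕ → Ω → ℝ) (Z : Ω → ℝ), (∀ n, MemLp (Y n) p μ) → MemLp Z p μ →
      Tendsto (fun n => eLpNorm (fun ω => Y n ω - Z ω) p μ) atTop (nhds 0) →
      (∀ n, R X (Y n)) → R X Z)

/-!
For a deviation measure `D`, `l·D + E` is cash additive, positively homogeneous and, for
`l ≥ 0`, subadditive, so it is coherent iff it is monotone. Writing `X ≤ Y` as `X = Y + Z` with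
`Z ≤ 0` and using subadditivity of `D`, monotonicity amounts to `l·D X ≤ ess-sup X - E[X]` for
every bounded-above `X`. Range normalization says that this bound holds for `l = 1` and fails
for every `l > 1`; a witness of the failure is automatically nonconstant, since law invariance
makes `D` vanish on a.s. constant random variables.
-/
lemma isCoboundedUnder_le_ae (μ : Measure Ω) [NeZero μ] (f : Ω → ℝ) :
    IsCoboundedUnder (· ≤ ·) (ae μ) f := by
  by_contra hf
  have h : ∀ n : ℕ, ∀ᵐ ω ∂μ, f ω ≤ -(n : ℝ) := fun n => by
    by_contra hn
    refine hf ⟨-(n : ℝ), fun a ha => ?_⟩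
    by_contra! han
    exact hn ((eventually_map.1 ha).mono fun ω hω => hω.trans han.le)
  obtain ⟨ω, hω⟩ := (ae_all_iff.2 h).exists
  obtain ⟨n, hn⟩ := exists_nat_gt (-f ω)
  linarith [hω n]

lemma integral_le_essSup {μ : Measure Ω} [IsProbabilityMeasure μ] {X : Ω → ℝ}
    (hX : Integrable X μ) (hbdd : ∃ c : ℝ, ∀ᵐ ω ∂μ, X ω ≤ c) :
    ∫ ω, X ω ∂μ ≤ essSup X μ := by
  obtain ⟨c, hc⟩ := hbdd
  have hle : ∀ᵐ ω ∂μ, X ω ≤ essSup X μ := ae_le_essSup ⟨c, eventually_map.2 hc⟩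
  simpa using integral_mono_ae hX (integrable_const _) hle

section DeviationMeasure

variable {μ : Measure Ω} {p : ℝ≥0∞} {D : (Ω → ℝ) → ℝ}

namespace IsDeviation

lemma apply_const [IsFiniteMeasure μ] (hD : IsDeviation μ p D) (c : ℝ) :
    D (fun _ => c) = 0 := by
  have hzero : D (fun _ => 0) = 0 := by
    simpa using hD.2.2.2.1 (fun _ => 0) (memLp_const 0) 0 le_rfl
  simpa [hzero] using hD.2.1 (fun _ => 0) (memLp_const 0) c

lemma apply_eq_zero_of_aeConst [IsFiniteMeasure μ] (hD : IsDeviation μ p D)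
    (hDl : LawInvariant μ p D) {X : Ω → ℝ} (hX : MemLp X p μ) (hXc : AEConst μ X) :
    D X = 0 := by
  obtain ⟨c, hc⟩ := hXc
  rw [hDl X _ hX (memLp_const c) (Measure.map_congr hc), hD.apply_const]

lemma apply_le_add_apply_sub (hD : IsDeviation μ p D) {X Y : Ω → ℝ}
    (hX : MemLp X p μ) (hY : MemLp Y p μ) :
    D X ≤ D Y + D (fun ω => X ω - Y ω) := by
  simpa only [add_sub_cancel] using hD.2.2.2.2 Y (fun ω => X ω - Y ω) hY (hX.sub hY)

lemma posHom_const_mul_add_integral (hD : IsDeviation μ p D) (l : ℝ) :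
    PosHom μ p (fun X => l * D X + ∫ ω, X ω ∂μ) := by
  intro X hX t ht
  simp only [hD.2.2.2.1 X hX t ht.le, integral_const_mul]
  ring

variable [IsProbabilityMeasure μ]

lemma cashAdditive_const_mul_add_integral (hp : 1 ≤ p) (hD : IsDeviation μ p D) (l : ℝ) :
    CashAdditive μ p (fun X => l * D X + ∫ ω, X ω ∂μ) := by
  intro X hX c
  simp only [hD.2.1 X hX c, integral_add (hX.integrable hp) (integrable_const c),
    integral_const, probReal_univ, one_smul]
  ring

lemma subadditiveRM_const_mul_add_integral (hp : 1 ≤ p) (hD : IsDeviation μ p D) {l : ℝ}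
    (hl : 0 ≤ l) : SubadditiveRM μ p (fun X => l * D X + ∫ ω, X ω ∂μ) := by
  intro X Y hX hY
  simp only [integral_add (hX.integrable hp) (hY.integrable hp)]
  nlinarith [hD.2.2.2.2 X Y hX hY]

end IsDeviation

def DominatedByUpperRange (μ : Measure Ω) (p : ℝ≥0∞) (D : (Ω → ℝ) → ℝ) (l : ℝ) : Prop :=
  ∀ X, MemLp X p μ → (∃ c : ℝ, ∀ᵐ ω ∂μ, X ω ≤ c) → l * D X ≤ essSup X μ - ∫ ω, X ω ∂μ

variable [IsProbabilityMeasure μ]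

lemma monotoneRM_iff_dominatedByUpperRange (hp : 1 ≤ p) (hD : IsDeviation μ p D) {l : ℝ}
    (hl : 0 ≤ l) :
    MonotoneRM μ p (fun X => l * D X + ∫ ω, X ω ∂μ) ↔ DominatedByUpperRange μ p D l := by
  constructor
  · rintro hmono X hX ⟨c, hc⟩
    have hle : ∀ᵐ ω ∂μ, X ω ≤ essSup X μ := ae_le_essSup ⟨c, eventually_map.2 hc⟩
    have h := hmono X _ hX (memLp_const _) hle
    simp only [hD.apply_const, integral_const, probReal_univ, one_smul, mul_zero,
      zero_add] at h
    linarith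
  · intro hdom X Y hX hY hXY
    set Z : Ω → ℝ := fun ω => X ω - Y ω
    have hZ0 : ∀ᵐ ω ∂μ, Z ω ≤ 0 := hXY.mono fun ω h => sub_nonpos.2 h
    have hZ : l * D Z ≤ essSup Z μ - ∫ ω, Z ω ∂μ := hdom Z (hX.sub hY) ⟨0, hZ0⟩
    have hess : essSup Z μ ≤ 0 := essSup_le_of_ae_le 0 hZ0 (isCoboundedUnder_le_ae μ Z)
    have hint : ∫ ω, Z ω ∂μ = ∫ ω, X ω ∂μ - ∫ ω, Y ω ∂μ :=
      integral_sub (hX.integrable hp) (hY.integrable hp)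
    have hsplit := mul_le_mul_of_nonneg_left (hD.apply_le_add_apply_sub hX hY) hl
    simp only
    linarith

lemma coherent_iff_dominatedByUpperRange (hp : 1 ≤ p) (hD : IsDeviation μ p D) {l : ℝ}
    (hl : 0 ≤ l) :
    Coherent μ p (fun X => l * D X + ∫ ω, X ω ∂μ) ↔ DominatedByUpperRange μ p D l := by
  rw [← monotoneRM_iff_dominatedByUpperRange hp hD hl]
  exact ⟨And.left, fun hmono => ⟨hmono, hD.cashAdditive_const_mul_add_integral hp l,
    hD.posHom_const_mul_add_integral l, hD.subadditiveRM_const_mul_add_integral hp hl⟩⟩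

lemma not_aeConst_of_sub_integral_lt (hp : 1 ≤ p) (hD : IsDeviation μ p D)
    (hDl : LawInvariant μ p D) {X : Ω → ℝ} (hX : MemLp X p μ)
    (hbdd : ∃ c : ℝ, ∀ᵐ ω ∂μ, X ω ≤ c) {l : ℝ} (hlt : essSup X μ - ∫ ω, X ω ∂μ < l * D X) :
    ¬ AEConst μ X := fun hXc => by
  rw [hD.apply_eq_zero_of_aeConst hDl hX hXc, mul_zero] at hlt
  linarith [integral_le_essSup (hX.integrable hp) hbdd]

lemma rangeNormalized_iff_dominatedByUpperRange (hp : 1 ≤ p) (hD : IsDeviation μ p D)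
    (hDl : LawInvariant μ p D) :
    RangeNormalized μ p D ↔
      DominatedByUpperRange μ p D 1 ∧ ∀ l : ℝ, 1 < l → ¬ DominatedByUpperRange μ p D l := by
  simp only [RangeNormalized, DominatedByUpperRange, one_mul]
  refine and_congr_right fun _ => ⟨fun hsharp l hl hdom => ?_, fun hstrict k hk => ?_⟩
  · obtain ⟨X, hX, hbdd, -, hlt⟩ := hsharp l⁻¹ (inv_lt_one_of_one_lt₀ hl)
    have := (inv_mul_lt_iff₀ (zero_lt_one.trans hl)).1 hlt
    linarith [hdom X hX hbdd]
  · set m := max k 2⁻¹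
    have hm0 : 0 < m := lt_max_of_lt_right (by norm_num)
    have hm1 : m < 1 := max_lt hk (by norm_num)
    obtain ⟨X, hX, hbdd, hlt⟩ : ∃ X, MemLp X p μ ∧ (∃ c : ℝ, ∀ᵐ ω ∂μ, X ω ≤ c) ∧
        essSup X μ - ∫ ω, X ω ∂μ < m⁻¹ * D X := by
      simpa using hstrict m⁻¹ ((one_lt_inv₀ hm0).2 hm1)
    have hmean_le := integral_le_essSup (hX.integrable hp) hbdd
    refine ⟨X, hX, hbdd, not_aeConst_of_sub_integral_lt hp hD hDl hX hbdd hlt, ?_⟩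
    calc k * (essSup X μ - ∫ ω, X ω ∂μ) ≤ m * (essSup X μ - ∫ ω, X ω ∂μ) :=
          mul_le_mul_of_nonneg_right (le_max_left _ _) (sub_nonneg.2 hmean_le)
      _ < D X := (lt_inv_mul_iff₀ hm0).1 hlt

end DeviationMeasure

theorem rangeNormalized_iff_coherent_general
    (μ : Measure Ω) [IsProbabilityMeasure μ]
    (p : ℝ≥0∞) (hp : 1 ≤ p)
    (D : (Ω → ℝ) → ℝ) (hD : IsDeviation μ p D) (hDl : LawInvariant μ p D) :
    RangeNormalized μ p D ↔
      (Coherent μ p (fun X => D X + ∫ ω, X ω ∂μ) ∧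
        ∀ l : ℝ, 1 < l → ¬ Coherent μ p (fun X => l * D X + ∫ ω, X ω ∂μ)) := by
  have hcoh (l : ℝ) (hl : 0 ≤ l) := coherent_iff_dominatedByUpperRange hp hD hl
  have hcoh_one := hcoh 1 zero_le_one
  simp only [one_mul] at hcoh_one
  rw [rangeNormalized_iff_dominatedByUpperRange hp hD hDl, hcoh_one]
  exact and_congr_right fun _ =>
    forall₂_congr fun l hl => not_congr (hcoh l (zero_le_one.trans hl.le)).symm

/-- Proposition (prop:verify): `D ∈ 𝒟^p` is range normalized iff `D + E` is a coherent
risk measure and `λD + E` is not coherent for any `λ > 1`. -/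
theorem rangeNormalized_iff_coherent
    (μ : Measure Ω) [IsProbabilityMeasure μ] (hna : Nonatomic μ)
    (p : ℝ≥0∞) (hp : 1 ≤ p)
    (D : (Ω → ℝ) → ℝ) (hD : IsDeviation μ p D) (hDl : LawInvariant μ p D) :
    RangeNormalized μ p D ↔
      (Coherent μ p (fun X => D X + ∫ ω, X ω ∂μ) ∧
        ∀ l : ℝ, 1 < l → ¬ Coherent μ p (fun X => l * D X + ∫ ω, X ω ∂μ)) :=
  rangeNormalized_iff_coherent_general μ p hp D hD hDl
end
end

section
/- Fix p ∈ [1,∞], D ∈ 𝒟̄^p and g ∈ 𝒢. Then MD^D_g is a convex risk measure if and only if g is a convex function on [0,∞). -/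
open MeasureTheory Filter Set
open scoped ENNReal

noncomputable section

variable {Ω : Type*} [MeasurableSpace Ω]

/-!
For `X ≤ Y`, subadditivity and range normalization give
`D X ≤ D Y + D (X - Y) ≤ D Y + (E[Y] - E[X])`, which the increasing, 1-Lipschitz `g` turns into
`g (D X) ≤ g (D Y) + (E[Y] - E[X])`: this is monotonicity of `MD`. Since `D` is convex and `g` is
increasing, convexity of `g` makes `g ∘ D`, hence `MD`, convex. Conversely, range normalization
provides `X₀` with `D X₀ > 0`, and along the ray `t ↦ t • X₀` the functional `MD` is `g (t D X₀)`
plus a linear function of `t`, so convexity of `MD` forces convexity of `g`.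
-/

theorem MeasureTheory.Integrable.essSup_le_of_ae_le {μ : Measure Ω} [IsFiniteMeasure μ]
    [NeZero μ] {f : Ω → ℝ} (hf : Integrable f μ) {c : ℝ} (h : ∀ᵐ ω ∂μ, f ω ≤ c) :
    essSup f μ ≤ c :=
  _root_.essSup_le_of_ae_le c h <| IsCoboundedUnder.of_frequently_ge <|
    frequently_ae_iff.2 (measure_average_le_pos (NeZero.ne μ) hf).ne'

section RiskFunctionals

variable {μ : Measure Ω} {p : ℝ≥0∞} {D : (Ω → ℝ) → ℝ} {g : ℝ → ℝ} {X Y : Ω → ℝ}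

namespace IsDeviation

variable (hD : IsDeviation μ p D)
include hD

theorem nonneg (hX : MemLp X p μ) : 0 ≤ D X := hD.1 X hX

theorem map_const_mul (hX : MemLp X p μ) {l : ℝ} (hl : 0 ≤ l) :
    D (fun ω => l * X ω) = l * D X :=
  hD.2.2.2.1 X hX l hl

theorem le_add_sub (hX : MemLp X p μ) (hY : MemLp Y p μ) :
    D X ≤ D Y + D (fun ω => X ω - Y ω) := by
  have h := hD.2.2.2.2 Y (fun ω => X ω - Y ω) hY (hX.sub hY)
  simp only [add_sub_cancel] at h
  exact h

theorem le_convex_comb (hX : MemLp X p μ) (hY : MemLp Y p μ) {l : ℝ} (hl₀ : 0 ≤ l)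
    (hl₁ : l ≤ 1) :
    D (fun ω => l * X ω + (1 - l) * Y ω) ≤ l * D X + (1 - l) * D Y := by
  rw [← hD.map_const_mul hX hl₀, ← hD.map_const_mul hY (sub_nonneg.2 hl₁)]
  exact hD.2.2.2.2 _ _ (hX.const_mul l) (hY.const_mul (1 - l))

end IsDeviation

namespace RangeNormalized

theorem exists_pos (hDr : RangeNormalized μ p D) : ∃ X, MemLp X p μ ∧ 0 < D X := by
  obtain ⟨X, hX, -, -, hpos⟩ := hDr.2 0 zero_lt_one
  exact ⟨X, hX, by simpa using hpos⟩

theorem apply_sub_le_integral_sub [IsProbabilityMeasure μ] (hp : 1 ≤ p)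
    (hDr : RangeNormalized μ p D) (hX : MemLp X p μ) (hY : MemLp Y p μ)
    (hle : ∀ᵐ ω ∂μ, X ω ≤ Y ω) :
    D (fun ω => X ω - Y ω) ≤ ∫ ω, Y ω ∂μ - ∫ ω, X ω ∂μ := by
  have hXY : ∀ᵐ ω ∂μ, X ω - Y ω ≤ 0 := hle.mono fun ω h => sub_nonpos.2 h
  have hess : essSup (fun ω => X ω - Y ω) μ ≤ 0 :=
    ((hX.sub hY).integrable hp).essSup_le_of_ae_le hXY
  have hD : D (fun ω => X ω - Y ω) ≤ essSup (fun ω => X ω - Y ω) μ - ∫ ω, (X ω - Y ω) ∂μ :=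
    hDr.1 _ (hX.sub hY) ⟨0, hXY⟩
  rw [integral_sub (hX.integrable hp) (hY.integrable hp)] at hD
  linarith

end RangeNormalized

theorem IsRiskWeight.le_add_of_le_add (hg : IsRiskWeight g) {a b c : ℝ} (ha : 0 ≤ a)
    (hb : 0 ≤ b) (hc : 0 ≤ c) (h : a ≤ b + c) : g a ≤ g b + c := by
  rcases le_total a b with hab | hba
  · linarith [hg.2.1 ha hb hab]
  · have := (abs_le.1 (hg.2.2.1 a b ha hb)).2
    rw [abs_of_nonneg (sub_nonneg.2 hba)] at this
    linarith

theorem MD_const_mul (hD : IsDeviation μ p D) (hX : MemLp X p μ) {s : ℝ} (hs : 0 ≤ s) :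
    MD μ D g (fun ω => s * X ω) = g (s * D X) + s * ∫ ω, X ω ∂μ := by
  rw [MD, hD.map_const_mul hX hs, integral_const_mul]

theorem convexOn_of_convexRMProp_MD (hD : IsDeviation μ p D) (hDr : RangeNormalized μ p D)
    (hCx : ConvexRMProp μ p (MD μ D g)) : ConvexOn ℝ (Ici 0) g := by
  obtain ⟨X₀, hX₀, hd⟩ := hDr.exists_pos
  have hray : ∀ t : ℝ, 0 ≤ t → MD μ D g (fun ω => t / D X₀ * X₀ ω)
      = g t + t * ((∫ ω, X₀ ω ∂μ) / D X₀) := by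
    intro t ht
    rw [MD_const_mul hD hX₀ (by positivity), div_mul_cancel₀ t hd.ne']
    ring
  refine ⟨convex_Ici 0, fun x hx y hy a b ha hb hab => ?_⟩
  obtain rfl : b = 1 - a := by linarith
  have h := hCx _ _ (hX₀.const_mul (x / D X₀)) (hX₀.const_mul (y / D X₀)) a ha (by linarith)
  have hcomb : (fun ω => a * (x / D X₀ * X₀ ω) + (1 - a) * (y / D X₀ * X₀ ω))
      = fun ω => (a * x + (1 - a) * y) / D X₀ * X₀ ω := by
    funext ω; ring
  have hxy : 0 ≤ a * x + (1 - a) * y := (convex_Ici 0) hx hy ha hb (by ring)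
  rw [hcomb, hray _ hxy, hray x hx, hray y hy] at h
  simp only [smul_eq_mul]
  linear_combination h

variable [IsProbabilityMeasure μ]

theorem monotoneRM_MD (hp : 1 ≤ p) (hD : IsDeviation μ p D) (hDr : RangeNormalized μ p D)
    (hg : IsRiskWeight g) : MonotoneRM μ p (MD μ D g) := by
  intro X Y hX hY hle
  have hmean : ∫ ω, X ω ∂μ ≤ ∫ ω, Y ω ∂μ :=
    integral_mono_ae (hX.integrable hp) (hY.integrable hp) hle
  have hDXY : D X ≤ D Y + (∫ ω, Y ω ∂μ - ∫ ω, X ω ∂μ) :=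
    (hD.le_add_sub hX hY).trans (by gcongr; exact hDr.apply_sub_le_integral_sub hp hX hY hle)
  have := hg.le_add_of_le_add (hD.nonneg hX) (hD.nonneg hY) (sub_nonneg.2 hmean) hDXY
  simp only [MD]
  linarith

theorem cashAdditive_MD (hp : 1 ≤ p) (hD : IsDeviation μ p D) : CashAdditive μ p (MD μ D g) := by
  intro X hX c
  simp only [MD, hD.2.1 X hX c, integral_add (hX.integrable hp) (integrable_const c),
    integral_const, probReal_univ, smul_eq_mul, one_mul]
  ring

theorem convexRMProp_MD (hp : 1 ≤ p) (hD : IsDeviation μ p D) (hg : IsRiskWeight g)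
    (hcx : ConvexOn ℝ (Ici 0) g) : ConvexRMProp μ p (MD μ D g) := by
  intro X Y hX hY l hl₀ hl₁
  have hDX := hD.nonneg hX
  have hDY := hD.nonneg hY
  have hcomb : 0 ≤ l * D X + (1 - l) * D Y :=
    add_nonneg (mul_nonneg hl₀ hDX) (mul_nonneg (sub_nonneg.2 hl₁) hDY)
  have hgD : g (D fun ω => l * X ω + (1 - l) * Y ω) ≤ l * g (D X) + (1 - l) * g (D Y) :=
    calc g (D fun ω => l * X ω + (1 - l) * Y ω)
        ≤ g (l * D X + (1 - l) * D Y) :=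
          hg.2.1 (hD.nonneg ((hX.const_mul l).add (hY.const_mul (1 - l)))) hcomb
            (hD.le_convex_comb hX hY hl₀ hl₁)
      _ ≤ l * g (D X) + (1 - l) * g (D Y) :=
          hcx.2 hDX hDY hl₀ (sub_nonneg.2 hl₁) (add_sub_cancel l 1)
  have hint : ∫ ω, (l * X ω + (1 - l) * Y ω) ∂μ
      = l * ∫ ω, X ω ∂μ + (1 - l) * ∫ ω, Y ω ∂μ := by
    rw [integral_add ((hX.integrable hp).const_mul l) ((hY.integrable hp).const_mul (1 - l)),
      integral_const_mul, integral_const_mul]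
  simp only [MD, hint]
  linarith

end RiskFunctionals

theorem MD_convexRiskMeasure_iff_convex_general
    (μ : Measure Ω) [IsProbabilityMeasure μ]
    (p : ℝ≥0∞) (hp : 1 ≤ p)
    (D : (Ω → ℝ) → ℝ) (hD : IsDeviation μ p D)
    (hDr : RangeNormalized μ p D)
    (g : ℝ → ℝ) (hg : IsRiskWeight g) :
    ConvexRiskMeasure μ p (MD μ D g) ↔ ConvexOn ℝ (Ici 0) g :=
  ⟨fun h => convexOn_of_convexRMProp_MD hD hDr h.2, fun hcx =>
    ⟨⟨monotoneRM_MD hp hD hDr hg, cashAdditive_MD hp hD⟩, convexRMProp_MD hp hD hg hcx⟩⟩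

/-- Theorem (prop:2 (ii)): `MD^D_g` is a convex risk measure iff `g` is convex. -/
theorem MD_convexRiskMeasure_iff_convex
    (μ : Measure Ω) [IsProbabilityMeasure μ] (hna : Nonatomic μ)
    (p : ℝ≥0∞) (hp : 1 ≤ p)
    (D : (Ω → ℝ) → ℝ) (hD : IsDeviation μ p D) (hDl : LawInvariant μ p D)
    (hDr : RangeNormalized μ p D)
    (g : ℝ → ℝ) (hg : IsRiskWeight g) :
    ConvexRiskMeasure μ p (MD μ D g) ↔ ConvexOn ℝ (Ici 0) g :=
  MD_convexRiskMeasure_iff_convex_general μ p hp D hD hDr g hg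
end
end
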